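/- For 0 < r < 1 and θ ∈ [−π,π] let T(r,θ) = ((r²−1)/log r) · 1/(1 − 2r·cos θ + r²). Then for each fixed θ ∈ [−π,π], the function r ↦ T(r,θ) is strictly increasing on (0,1); moreover, if θ ≠ 0 then T(r,θ) → 1/(1−cos θ) as r → 1 from the left, while T(r,0) → +∞ as r → 1 from the left. -/

import Mathlib

open Filter

/-- T(r,θ) = ((r²−1)/log r) · 1/(1 − 2r·cos θ + r²). -/
noncomputable def Tker (r θ : ℝ) : ℝ :=
  ((r ^ 2 - 1) / Real.log r) * (1 / (1 - 2 * r * Real.cos θ + r ^ 2))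

/-!
With `c = cos θ` and `D = 1 - 2rc + r²`, the numerator of `∂T/∂r` is affine in `c`; evaluating at
`c = ±1` gives `∂T/∂r = ((1+c)(1-r)²(1-r²-2r log r) + (1-c)(1+r)²(1-r²+2r log r)) / (2r log² r D²)`.
Both brackets are positive on `(0,1)`, the second because `sinh t > t` at `t = -log r`.
As `r → 1`, `(r²-1)/log r → 2` and `D → 2(1 - cos θ)`, which vanishes only at `θ = 0`,
where `D = (1-r)²` tends to `0` from above.
-/

open Topology Real

lemma one_sub_sq_add_two_mul_log_pos {r : ℝ} (h0 : 0 < r) (h1 : r < 1) :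
    0 < 1 - r ^ 2 + 2 * r * log r := by
  have hsinh : log r⁻¹ < (r⁻¹ - r) / 2 := by
    have := self_lt_sinh_iff.2 (neg_pos.2 (log_neg h0 h1))
    rwa [← log_inv, sinh_log (inv_pos.2 h0), inv_inv] at this
  have hr : r * r⁻¹ = 1 := mul_inv_cancel₀ h0.ne'
  rw [log_inv] at hsinh
  nlinarith

lemma one_sub_two_mul_cos_add_sq_pos (θ : ℝ) {r : ℝ} (h0 : 0 ≤ r) (h1 : r ≠ 1) :
    0 < 1 - 2 * r * cos θ + r ^ 2 := by
  have : 0 < (1 - r) ^ 2 := sq_pos_of_ne_zero (sub_ne_zero.2 h1.symm)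
  nlinarith [cos_le_one θ]

lemma hasDerivAt_Tker (θ : ℝ) {r : ℝ} (h0 : 0 < r) (h1 : r ≠ 1) :
    HasDerivAt (Tker · θ)
      (((1 + cos θ) * (1 - r) ^ 2 * (1 - r ^ 2 - 2 * r * log r) +
          (1 - cos θ) * (1 + r) ^ 2 * (1 - r ^ 2 + 2 * r * log r)) /
        (2 * r * log r ^ 2 * (1 - 2 * r * cos θ + r ^ 2) ^ 2)) r := by
  have hlog : log r ≠ 0 := log_ne_zero_of_pos_of_ne_one h0 h1
  have hD := (one_sub_two_mul_cos_add_sq_pos θ h0.le h1).ne'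
  have hnum : HasDerivAt (fun x : ℝ => x ^ 2 - 1) (2 * r) r := by
    simpa using (hasDerivAt_pow 2 r).sub_const 1
  have hden : HasDerivAt (fun x : ℝ => 1 - 2 * x * cos θ + x ^ 2) (2 * r - 2 * cos θ) r :=
    ((((hasDerivAt_id' r).const_mul 2).mul_const (cos θ)).const_sub 1).fun_add
      (hasDerivAt_pow 2 r) |>.congr_deriv (by push_cast; ring)
  refine ((hnum.fun_div (hasDerivAt_log h0.ne') hlog).fun_mul
    ((hasDerivAt_const r (1 : ℝ)).fun_div hden hD)).congr_deriv ?_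
  field_simp
  ring

lemma deriv_Tker_pos (θ : ℝ) {r : ℝ} (h0 : 0 < r) (h1 : r < 1) :
    0 < deriv (Tker · θ) r := by
  have hlog := log_neg h0 h1
  have hA : 0 < (1 - r) ^ 2 * (1 - r ^ 2 - 2 * r * log r) :=
    mul_pos (by nlinarith) (by nlinarith)
  have hB : 0 < (1 + r) ^ 2 * (1 - r ^ 2 + 2 * r * log r) :=
    mul_pos (by positivity) (one_sub_sq_add_two_mul_log_pos h0 h1)
  have hD := one_sub_two_mul_cos_add_sq_pos θ h0.le h1.ne
  have hlog_ne := hlog.ne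
  rw [(hasDerivAt_Tker θ h0 h1.ne).deriv]
  refine div_pos ?_ (by positivity)
  rcases le_total (cos θ) 0 with hc | hc
  · nlinarith [mul_nonneg (by linarith [neg_one_le_cos θ] : 0 ≤ 1 + cos θ) hA.le]
  · nlinarith [mul_nonneg (by linarith [cos_le_one θ] : 0 ≤ 1 - cos θ) hB.le]

theorem strictMonoOn_Tker (θ : ℝ) : StrictMonoOn (Tker · θ) (Set.Ioo 0 1) := by
  refine strictMonoOn_of_deriv_pos (convex_Ioo 0 1)
    (fun r hr => (hasDerivAt_Tker θ hr.1 hr.2.ne).continuousAt.continuousWithinAt)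
    fun r hr => ?_
  rw [interior_Ioo] at hr
  exact deriv_Tker_pos θ hr.1 hr.2

lemma tendsto_sub_one_div_log : Tendsto (fun x => (x - 1) / log x) (𝓝[≠] 1) (𝓝 1) := by
  have := hasDerivAt_iff_tendsto_slope.1 (hasDerivAt_log one_ne_zero)
  simpa [slope_fun_def_field, inv_div] using this.inv₀ (by norm_num)

lemma tendsto_sq_sub_one_div_log : Tendsto (fun x => (x ^ 2 - 1) / log x) (𝓝[≠] 1) (𝓝 2) := by
  have hadd : Tendsto (fun x : ℝ => x + 1) (𝓝[≠] 1) (𝓝 2) := by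
    convert (continuous_add_const (1 : ℝ)).continuousAt.tendsto.mono_left nhdsWithin_le_nhds
      using 2; norm_num
  convert hadd.mul tendsto_sub_one_div_log using 2 <;> ring

lemma tendsto_Tker_of_cos_ne_one {θ : ℝ} (hθ : cos θ ≠ 1) :
    Tendsto (Tker · θ) (𝓝[≠] 1) (𝓝 (1 / (1 - cos θ))) := by
  have hne : 1 - cos θ ≠ 0 := sub_ne_zero.2 hθ.symm
  have hD : Tendsto (fun r : ℝ => 1 - 2 * r * cos θ + r ^ 2) (𝓝[≠] 1) (𝓝 (2 * (1 - cos θ))) :=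
    tendsto_nhdsWithin_of_tendsto_nhds <| (by fun_prop : Continuous _).tendsto' 1 _ (by ring)
  have hinv : Tendsto (fun r : ℝ => 1 / (1 - 2 * r * cos θ + r ^ 2)) (𝓝[≠] 1)
      (𝓝 (1 / (2 * (1 - cos θ)))) :=
    tendsto_const_nhds.div hD (mul_ne_zero two_ne_zero hne)
  unfold Tker
  convert tendsto_sq_sub_one_div_log.mul hinv using 2
  field_simp

lemma tendsto_Tker_zero : Tendsto (Tker · 0) (𝓝[≠] 1) atTop := by
  have hD : Tendsto (fun r : ℝ => 1 - 2 * r * cos 0 + r ^ 2) (𝓝[≠] 1) (𝓝[>] 0) := by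
    refine tendsto_nhdsWithin_iff.2 ⟨tendsto_nhdsWithin_of_tendsto_nhds <|
      (by fun_prop : Continuous _).tendsto' 1 _ (by rw [cos_zero]; ring), ?_⟩
    filter_upwards [self_mem_nhdsWithin, nhdsWithin_le_nhds (eventually_gt_nhds one_pos)]
      with r hr1 hr0
    exact one_sub_two_mul_cos_add_sq_pos 0 hr0.le hr1
  simpa only [Tker, one_div, Function.comp_def] using
    tendsto_sq_sub_one_div_log.pos_mul_atTop two_pos (tendsto_inv_nhdsGT_zero.comp hD)

theorem stmt14 :
    (∀ θ ∈ Set.Icc (-Real.pi) Real.pi,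
      StrictMonoOn (fun r => Tker r θ) (Set.Ioo (0 : ℝ) 1)) ∧
    (∀ θ ∈ Set.Icc (-Real.pi) Real.pi, θ ≠ 0 →
      Tendsto (fun r => Tker r θ) (nhdsWithin 1 (Set.Iio 1))
        (nhds (1 / (1 - Real.cos θ)))) ∧
    Tendsto (fun r => Tker r 0) (nhdsWithin 1 (Set.Iio 1)) atTop := by
  refine ⟨fun θ _ => strictMonoOn_Tker θ, fun θ ⟨hπθ, hθπ⟩ hθ => ?_,
    tendsto_Tker_zero.mono_left (nhdsLT_le_nhdsNE 1)⟩
  have hcos : cos θ ≠ 1 := fun h =>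
    hθ <| (cos_eq_one_iff_of_lt_of_lt (by linarith [pi_pos]) (by linarith [pi_pos])).1 h
  exact (tendsto_Tker_of_cos_ne_one hcos).mono_left (nhdsLT_le_nhdsNE 1)
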